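/- Let a, b, c be reals with c ≠ 0, x₀ a root of a² - 2bx + cx² = 0 with 0 < x₀, a > 0, and Δ = ∫₀^{x₀} dx/√(a² - 2bx + cx²) (convergent improper integral). Then ∫₀^{x₀} x dx/√(a² - 2bx + cx²) = (b/c)·Δ - a/c. -/

import Mathlib

/-!
Write `Q x = a² - 2bx + cx²`. Off the (at most two) zeros of `Q`, the function `√Q`, which is
`0` wherever `Q < 0`, has derivative `(cx - b) / √Q`, read as `0` where `√Q = 0`. The fundamental
theorem of calculus with a countable exceptional set then gives
`c · ∫₀^{x₀} x/√Q - b · Δ = √(Q x₀) - √(Q 0) = 0 - a`.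
-/

open Set Polynomial MeasureTheory

theorem finite_setOf_quadratic_eq_zero {a b c : ℝ} (hc : c ≠ 0) :
    {x : ℝ | a + b * x + c * x ^ 2 = 0}.Finite := by
  have hp : C a + C b * X + C c * X ^ 2 ≠ 0 := fun h => hc <| by
    simpa using congr_arg (coeff · 2) h
  simpa using finite_setOfPred_isRoot hp

theorem integral_div_two_mul_sqrt_eq_sub {f f' : ℝ → ℝ} {u v : ℝ}
    (hf : ∀ x, HasDerivAt f (f' x) x) (hzero : {x | f x = 0}.Countable)
    (hi : IntervalIntegrable (fun x => f' x / (2 * √(f x))) volume u v) :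
    ∫ x in u..v, f' x / (2 * √(f x)) = √(f v) - √(f u) :=
  integral_eq_of_hasDerivAt_off_countable (fun x => √(f x)) _ hzero
    (continuous_iff_continuousAt.2 fun x => (hf x).continuousAt).sqrt.continuousOn
    (fun x hx => (hf x).sqrt hx.2) hi

theorem integral_linear_div_sqrt_quadratic {a b c u v : ℝ} (hc : c ≠ 0)
    (hi : IntervalIntegrable (fun x => (c * x - b) / √(a - 2 * b * x + c * x ^ 2)) volume u v) :
    ∫ x in u..v, (c * x - b) / √(a - 2 * b * x + c * x ^ 2)
      = √(a - 2 * b * v + c * v ^ 2) - √(a - 2 * b * u + c * u ^ 2) := by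
  set Q : ℝ → ℝ := fun x => a - 2 * b * x + c * x ^ 2
  have hQ : ∀ x, HasDerivAt Q (2 * c * x - 2 * b) x := fun x => by
    refine ((((hasDerivAt_id x).const_mul (2 * b)).const_sub a).add
      ((hasDerivAt_pow 2 x).const_mul c)).congr_deriv ?_
    norm_num; ring
  have hzero : {x | Q x = 0}.Countable := by
    refine (finite_setOf_quadratic_eq_zero (a := a) (b := -2 * b) hc).countable.mono
      fun x hx => ?_
    simp only [mem_ofPred_eq, Q] at hx ⊢
    linarith
  have hhalf : (fun x => (c * x - b) / √(Q x)) = fun x => (2 * c * x - 2 * b) / (2 * √(Q x)) :=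
    funext fun x => by ring
  rw [hhalf] at hi ⊢
  exact integral_div_two_mul_sqrt_eq_sub hQ hzero hi

theorem euler_first_moment_general (a b c x₀ : ℝ) (hc : c ≠ 0) (ha : 0 < a)
    (hroot : a ^ 2 - 2 * b * x₀ + c * x₀ ^ 2 = 0)
    (hint : ∀ k : ℕ, IntervalIntegrable
      (fun x => x ^ k / Real.sqrt (a ^ 2 - 2 * b * x + c * x ^ 2))
      MeasureTheory.volume 0 x₀)
    (Δ : ℝ)
    (hΔ : Δ = ∫ x in (0 : ℝ)..x₀, 1 / Real.sqrt (a ^ 2 - 2 * b * x + c * x ^ 2)) :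
    ∫ x in (0 : ℝ)..x₀, x / Real.sqrt (a ^ 2 - 2 * b * x + c * x ^ 2)
      = (b / c) * Δ - a / c := by
  set Q : ℝ → ℝ := fun x => a ^ 2 - 2 * b * x + c * x ^ 2
  have hI₀ : IntervalIntegrable (fun x => 1 / √(Q x)) volume 0 x₀ := by simpa using hint 0
  have hI₁ : IntervalIntegrable (fun x => x / √(Q x)) volume 0 x₀ := by simpa using hint 1
  have hsplit : (fun x => (c * x - b) / √(Q x)) = fun x => c * (x / √(Q x)) - b * (1 / √(Q x)) :=
    funext fun x => by ring
  have hi : IntervalIntegrable (fun x => (c * x - b) / √(Q x)) volume 0 x₀ :=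
    hsplit ▸ (hI₁.const_mul c).sub (hI₀.const_mul b)
  have hFTC := integral_linear_div_sqrt_quadratic hc hi
  rw [hsplit, intervalIntegral.integral_sub (hI₁.const_mul c) (hI₀.const_mul b),
    intervalIntegral.integral_const_mul, intervalIntegral.integral_const_mul, ← hΔ, hroot,
    Real.sqrt_zero, show √(a ^ 2 - 2 * b * 0 + c * 0 ^ 2) = a by simp [ha.le]] at hFTC
  change ∫ x in (0 : ℝ)..x₀, x / √(Q x) = _
  rw [div_mul_eq_mul_div, div_sub_div_same, eq_div_iff hc]
  linarith

theorem euler_first_moment (a b c x₀ : ℝ) (hc : c ≠ 0) (ha : 0 < a) (hx₀ : 0 < x₀)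
    (hroot : a ^ 2 - 2 * b * x₀ + c * x₀ ^ 2 = 0)
    (hint : ∀ k : ℕ, IntervalIntegrable
      (fun x => x ^ k / Real.sqrt (a ^ 2 - 2 * b * x + c * x ^ 2))
      MeasureTheory.volume 0 x₀)
    (Δ : ℝ)
    (hΔ : Δ = ∫ x in (0 : ℝ)..x₀, 1 / Real.sqrt (a ^ 2 - 2 * b * x + c * x ^ 2)) :
    ∫ x in (0 : ℝ)..x₀, x / Real.sqrt (a ^ 2 - 2 * b * x + c * x ^ 2)
      = (b / c) * Δ - a / c :=
  euler_first_moment_general a b c x₀ hc ha hroot hint Δ hΔ
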